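/- arXiv:1609.01386 — 2 statements merged into one kernel-verified Lean document; each statement's English description precedes it below -/
import Mathlib

section
/- For real numbers A ≠ 0, C > 0 and complex ν with Re(ν) > 1/2, the integral ∫_{-∞}^{∞} (A²x² + C)^{-ν} dx equals √π · (Γ(ν - 1/2)/Γ(ν)) · |A|^{-1} · C^{-ν + 1/2}. -/
/-!
Rescaling `x ↦ |A| x / √C` pulls out the factor `C ^ (-ν) · √C / |A|` and leaves
`∫ (1 + x²) ^ (-ν)`. The integrand is even, and on `(0, ∞)` the substitution `u = x² / (1 + x²)`
turns `(1 + x²) ^ (-ν) dx` into `½ u ^ (-1/2) (1 - u) ^ (ν - 3/2) du`, so the integral is the Beta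
integral `B(1/2, ν - 1/2) = Γ(1/2) Γ(ν - 1/2) / Γ(ν)`, with `Γ(1/2) = √π`.
-/

open MeasureTheory Complex Set

theorem ofReal_sqrt_eq_cpow {y : ℝ} (hy : 0 ≤ y) : ((√y : ℝ) : ℂ) = (y : ℂ) ^ (1 / 2 : ℂ) := by
  rw [Real.sqrt_eq_rpow, ofReal_cpow hy]
  norm_num

theorem integral_eq_two_smul_integral_Ioi_of_even {E : Type*} [NormedAddCommGroup E]
    [NormedSpace ℝ E] {f : ℝ → E} (hf : Integrable f) (heven : ∀ x, f (-x) = f x) :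
    ∫ x, f x = (2 : ℝ) • ∫ x in Ioi 0, f x := by
  rw [← intervalIntegral.integral_Iic_add_Ioi hf.integrableOn hf.integrableOn, two_smul,
    ← neg_zero, ← integral_comp_neg_Ioi, neg_zero]
  simp only [heven]

theorem integrable_one_add_sq_cpow_neg {ν : ℂ} (hν : 1 / 2 < ν.re) :
    Integrable fun x : ℝ => ((1 + x ^ 2 : ℝ) : ℂ) ^ (-ν) := by
  have hbound : Integrable fun x : ℝ => (1 + ‖x‖ ^ 2) ^ (-(2 * ν.re) / 2) :=
    integrable_rpow_neg_one_add_norm_sq (by simp only [Module.finrank_self]; push_cast; linarith)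
  have hmeas : Measurable fun x : ℝ => ((1 + x ^ 2 : ℝ) : ℂ) := by fun_prop
  refine hbound.mono' (hmeas.pow_const _).aestronglyMeasurable (ae_of_all _ fun x => ?_)
  rw [norm_cpow_eq_rpow_re_of_pos (by positivity), Real.norm_eq_abs, sq_abs, neg_re]
  exact le_of_eq (by ring_nf)

theorem strictMonoOn_sq_div_one_add_sq :
    StrictMonoOn (fun x : ℝ => x ^ 2 / (1 + x ^ 2)) (Ici 0) := by
  intro x (hx : 0 ≤ x) y (hy : 0 ≤ y) hxy
  rw [div_lt_div_iff₀ (by positivity) (by positivity)]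
  nlinarith [mul_lt_mul'' hxy hxy hx hx]

theorem image_sq_div_one_add_sq_Ioi :
    (fun x : ℝ => x ^ 2 / (1 + x ^ 2)) '' Ioi 0 = Ioo 0 1 := by
  ext u
  constructor
  · rintro ⟨x, hx : 0 < x, rfl⟩
    exact ⟨by positivity, (div_lt_one (by positivity)).mpr (by linarith)⟩
  · rintro ⟨hu0, hu1⟩
    have hu : 0 < u / (1 - u) := div_pos hu0 (by linarith)
    refine ⟨√(u / (1 - u)), Real.sqrt_pos.mpr hu, ?_⟩
    simp only [Real.sq_sqrt hu.le]
    field_simp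
    ring

theorem hasDerivAt_sq_div_one_add_sq (x : ℝ) :
    HasDerivAt (fun x : ℝ => x ^ 2 / (1 + x ^ 2)) (2 * x / (1 + x ^ 2) ^ 2) x := by
  have hsq : HasDerivAt (fun x : ℝ => x ^ 2) (2 * x) x := by simpa using hasDerivAt_pow 2 x
  exact (hsq.div (hsq.const_add 1) (by positivity)).congr_deriv (by ring)

theorem abs_deriv_smul_betaIntegrand {x : ℝ} (hx : 0 < x) (ν : ℂ) :
    |2 * x / (1 + x ^ 2) ^ 2| •
      (((x ^ 2 / (1 + x ^ 2) : ℝ) : ℂ) ^ ((1 / 2 : ℂ) - 1) *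
        (1 - ((x ^ 2 / (1 + x ^ 2) : ℝ) : ℂ)) ^ (ν - 1 / 2 - 1))
      = 2 * ((1 + x ^ 2 : ℝ) : ℂ) ^ (-ν) := by
  set y : ℝ := 1 + x ^ 2
  have hy : 0 < y := by positivity
  have hyC : (y : ℂ) ≠ 0 := ofReal_ne_zero.mpr hy.ne'
  have hxC : (x : ℂ) ≠ 0 := ofReal_ne_zero.mpr hx.ne'
  have hleft : ((x ^ 2 / y : ℝ) : ℂ) ^ ((1 / 2 : ℂ) - 1) = (y : ℂ) ^ (1 / 2 : ℂ) / x := by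
    rw [show (1 / 2 : ℂ) - 1 = ((-(1 / 2) : ℝ) : ℂ) by push_cast; ring,
      ← ofReal_cpow (by positivity), Real.rpow_neg (by positivity), ← Real.sqrt_eq_rpow,
      Real.sqrt_div (sq_nonneg x), Real.sqrt_sq hx.le, inv_div, ofReal_div,
      ofReal_sqrt_eq_cpow hy.le]
  have hright : (1 - ((x ^ 2 / y : ℝ) : ℂ)) ^ (ν - 1 / 2 - 1)
      = ((y : ℂ) ^ (ν - 1 / 2 - 1))⁻¹ := by
    have hsub : 1 - x ^ 2 / y = y⁻¹ := by
      field_simp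
      ring
    rw [← ofReal_one, ← ofReal_sub, hsub, ofReal_inv, inv_cpow_ofReal_nonneg hy.le]
  have hsplit : (y : ℂ) ^ (1 / 2 : ℂ)
      = (y : ℂ) ^ (-ν) * (y : ℂ) ^ (2 : ℕ) * (y : ℂ) ^ (ν - 1 / 2 - 1) := by
    rw [← cpow_natCast, ← cpow_add _ _ hyC, ← cpow_add _ _ hyC]
    ring_nf
  have hpow : (y : ℂ) ^ (ν - 1 / 2 - 1) ≠ 0 := cpow_ne_zero_iff.mpr (Or.inl hyC)
  rw [hleft, hright, hsplit, abs_of_pos (by positivity), real_smul]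
  generalize (y : ℂ) ^ (ν - 1 / 2 - 1) = p at hpow ⊢
  push_cast
  field_simp

theorem integral_Ioi_one_add_sq_cpow_neg (ν : ℂ) :
    ∫ x in Ioi (0 : ℝ), ((1 + x ^ 2 : ℝ) : ℂ) ^ (-ν) = betaIntegral (1 / 2) (ν - 1 / 2) / 2 := by
  have hsubst := integral_image_eq_integral_abs_deriv_smul measurableSet_Ioi
    (fun x _ => (hasDerivAt_sq_div_one_add_sq x).hasDerivWithinAt)
    (strictMonoOn_sq_div_one_add_sq.injOn.mono Ioi_subset_Ici_self)
    (fun u : ℝ => (u : ℂ) ^ ((1 / 2 : ℂ) - 1) * (1 - (u : ℂ)) ^ (ν - 1 / 2 - 1))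
  rw [image_sq_div_one_add_sq_Ioi, ← integral_Ioc_eq_integral_Ioo,
    ← intervalIntegral.integral_of_le zero_le_one, setIntegral_congr_fun measurableSet_Ioi
      (fun x hx => abs_deriv_smul_betaIntegrand hx ν), integral_const_mul] at hsubst
  rw [betaIntegral, hsubst]
  ring

theorem integral_one_add_sq_cpow_neg {ν : ℂ} (hν : 1 / 2 < ν.re) :
    ∫ x : ℝ, ((1 + x ^ 2 : ℝ) : ℂ) ^ (-ν) = (√Real.pi : ℂ) * (Gamma (ν - 1 / 2) / Gamma ν) := by
  have hhalf : (0 : ℝ) < (1 / 2 : ℂ).re := by norm_num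
  have hshift : 0 < (ν - 1 / 2).re := by norm_num; linarith
  rw [integral_eq_two_smul_integral_Ioi_of_even (integrable_one_add_sq_cpow_neg hν)
      (fun x => by simp only [neg_sq]),
    integral_Ioi_one_add_sq_cpow_neg, betaIntegral_eq_Gamma_mul_div _ _ hhalf hshift,
    add_sub_cancel, Gamma_one_half_eq, ← ofReal_sqrt_eq_cpow Real.pi_pos.le, real_smul]
  push_cast
  ring

theorem sq_mul_sq_add_eq_mul_one_add_sq (A : ℝ) {C : ℝ} (hC : 0 < C) (x : ℝ) :
    A ^ 2 * x ^ 2 + C = C * (1 + (|A| / √C * x) ^ 2) := by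
  rw [mul_pow, div_pow, sq_abs, Real.sq_sqrt hC.le]
  field_simp
  ring

theorem stmt0_general (A C : ℝ) (hC : 0 < C) (ν : ℂ) (hν : 1 / 2 < ν.re) :
    (∫ x : ℝ, ((A ^ 2 * x ^ 2 + C : ℝ) : ℂ) ^ (-ν))
      = (Real.sqrt Real.pi : ℂ) * (Complex.Gamma (ν - 1 / 2) / Complex.Gamma ν) *
        ((|A| : ℝ) : ℂ)⁻¹ * ((C : ℝ) : ℂ) ^ (-ν + 1 / 2) := by
  have hfactor (x : ℝ) : ((A ^ 2 * x ^ 2 + C : ℝ) : ℂ) ^ (-ν)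
      = (C : ℂ) ^ (-ν) * ((1 + (|A| / √C * x) ^ 2 : ℝ) : ℂ) ^ (-ν) := by
    rw [sq_mul_sq_add_eq_mul_one_add_sq A hC, ofReal_mul,
      mul_cpow_ofReal_nonneg hC.le (by positivity)]
  have hCC : (C : ℂ) ≠ 0 := ofReal_ne_zero.mpr hC.ne'
  simp_rw [hfactor]
  rw [integral_const_mul, Measure.integral_comp_mul_left (fun y => ((1 + y ^ 2 : ℝ) : ℂ) ^ (-ν)),
    integral_one_add_sq_cpow_neg hν, inv_div, abs_div, abs_abs,
    abs_of_pos (Real.sqrt_pos.mpr hC), real_smul, ofReal_div, ofReal_sqrt_eq_cpow hC.le,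
    cpow_add _ _ hCC]
  ring

/-- Gradshteyn–Ryzhik type integral: ∫_{-∞}^{∞} (A²x² + C)^{-ν} dx
    = √π · Γ(ν - 1/2)/Γ(ν) · |A|⁻¹ · C^{-ν+1/2}. -/
theorem stmt0 (A C : ℝ) (hA : A ≠ 0) (hC : 0 < C) (ν : ℂ) (hν : 1 / 2 < ν.re) :
    (∫ x : ℝ, ((A ^ 2 * x ^ 2 + C : ℝ) : ℂ) ^ (-ν))
      = (Real.sqrt Real.pi : ℂ) * (Complex.Gamma (ν - 1 / 2) / Complex.Gamma ν) *
        ((|A| : ℝ) : ℂ)⁻¹ * ((C : ℝ) : ℂ) ^ (-ν + 1 / 2) :=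
  stmt0_general A C hC ν hν
end

section
/- Let n ≥ 2, γ ∈ SL_k(ℤ) with bottom row (γ_{k,1},...,γ_{k,k}), and z ∈ X_n in Iwasawa form. Then the (k, k+1)-entry of the unipotent part of the Iwasawa form of diag(γ, I_{n−k})·z equals ∑_{i=1}^k γ_{k,i} x_{i,k+1}, where x_{i,k+1} are the corresponding entries of the unipotent part of z. -/
open Matrix

/-!
Write the hypothesis as `M * κ = A` with `A = diag(γ, I) * x * Y` and `M = c • x' * Y'`: `M` is
upper triangular with nonzero diagonal, `κ` is orthogonal, and since rows `k, …, n-1` of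
`diag(γ, I)` are rows of the identity, the same rows of `A` are upper triangular. Descending
induction on the row (triangularity of `M * κ` below the diagonal, orthogonality of `κ` above it)
shows that these rows of `κ` are `±eᵢ`. Hence column `k` of `κ` is `±eₖ`, column `k` of `A` is
proportional to column `k` of `M`, and comparing entries `(k-1, k)` and `(k, k)` gives
`x' (k-1) k = (diag(γ, I) * x) (k-1) k` (indices from `0`).
-/

section Orthogonal

variable {ι R : Type*} [Fintype ι] [CommRing R] {κ M A : Matrix ι ι R}

theorem apply_eq_zero_of_mul_transpose_eq_one_of_row [DecidableEq ι] (hκ : κ * κᵀ = 1) {i j : ι}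
    (hrow : ∀ m, m ≠ j → κ j m = 0) (hij : i ≠ j) : κ i j = 0 := by
  have hsum (l : ι) : (κ * κᵀ) l j = κ l j * κ j j := by
    rw [mul_apply, Fintype.sum_eq_single j fun m hm => by rw [transpose_apply, hrow m hm, mul_zero]]
    rfl
  have hjj : κ j j * κ j j = 1 := by rw [← hsum, hκ, one_apply_eq]
  have hij' : κ i j * κ j j = 0 := by rw [← hsum, hκ, one_apply_ne hij]
  calc κ i j = κ i j * κ j j * κ j j := by rw [mul_assoc, hjj, mul_one]
    _ = 0 := by rw [hij', zero_mul]

theorem mul_apply_of_col (M : Matrix ι ι R) {j : ι} (hcol : ∀ m, m ≠ j → κ m j = 0) (i : ι) :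
    (M * κ) i j = M i j * κ j j := by
  rw [mul_apply, Fintype.sum_eq_single j fun m hm => by rw [hcol m hm, mul_zero]]

variable [LinearOrder ι] [NoZeroDivisors R]

theorem apply_eq_zero_of_mul_eq_of_lt (hM : M.BlockTriangular id) (h : M * κ = A) {i j : ι}
    (hMi : M i i ≠ 0) (hA : A i j = 0) (hrows : ∀ m, i < m → κ m j = 0) : κ i j = 0 := by
  have hAij : A i j = M i i * κ i j := by
    rw [← h, mul_apply, Fintype.sum_eq_single i]
    intro m hm
    rcases hm.lt_or_gt with hmi | him
    · rw [hM hmi, zero_mul]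
    · rw [hrows m him, mul_zero]
  exact (mul_eq_zero.mp (hAij ▸ hA)).resolve_left hMi

theorem row_apply_eq_zero_of_mul_eq [DecidableEq ι] (hκ : κ * κᵀ = 1) (hM : M.BlockTriangular id)
    (hMd : ∀ i, M i i ≠ 0) (h : M * κ = A) {k : ι} (hA : ∀ i j, k ≤ i → j < i → A i j = 0) :
    ∀ i, k ≤ i → ∀ j, j ≠ i → κ i j = 0 := by
  intro i
  induction i using WellFoundedGT.induction with
  | _ i ih =>
    intro hki j hji
    rcases hji.lt_or_gt with hlt | hgt
    · exact apply_eq_zero_of_mul_eq_of_lt hM h (hMd i) (hA i j hki hlt)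
        fun m hm => ih m hm (hki.trans hm.le) j (hlt.trans hm).ne
    · exact apply_eq_zero_of_mul_transpose_eq_one_of_row hκ (ih j hgt (hki.trans hgt.le)) hji.symm

theorem col_apply_mul_eq_of_mul_eq [DecidableEq ι] (hκ : κ * κᵀ = 1) (hM : M.BlockTriangular id)
    (hMd : ∀ i, M i i ≠ 0) (h : M * κ = A) {k : ι} (hA : ∀ i j, k ≤ i → j < i → A i j = 0)
    (i : ι) : A i k * M k k = M i k * A k k := by
  have hcol (m : ι) (hm : m ≠ k) : κ m k = 0 :=
    apply_eq_zero_of_mul_transpose_eq_one_of_row hκ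
      (row_apply_eq_zero_of_mul_eq hκ hM hMd h hA k le_rfl) hm
  rw [← h, mul_apply_of_col M hcol, mul_apply_of_col M hcol]
  ring

end Orthogonal

section Embedding

variable {n k : ℕ}

/-- `diag(γ, I_{n-k})`. -/
def embedBlock (n : ℕ) (γ : Matrix (Fin k) (Fin k) ℤ) : Matrix (Fin n) (Fin n) ℝ :=
  Matrix.of fun i j : Fin n =>
    if h : (i : ℕ) < k ∧ (j : ℕ) < k then ((γ ⟨i, h.1⟩ ⟨j, h.2⟩ : ℤ) : ℝ)
    else if i = j then 1 else 0

theorem embedBlock_mul_apply_of_le (γ : Matrix (Fin k) (Fin k) ℤ) (B : Matrix (Fin n) (Fin n) ℝ)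
    {i : Fin n} (hi : k ≤ i) (j : Fin n) : (embedBlock n γ * B) i j = B i j := by
  rw [mul_apply, Fintype.sum_eq_single i fun l hl => by
    simp [embedBlock, show ¬(i : ℕ) < k by omega, hl.symm]]
  simp [embedBlock, show ¬(i : ℕ) < k by omega]

theorem embedBlock_mul_apply_of_lt (hkn : k ≤ n) (γ : Matrix (Fin k) (Fin k) ℤ)
    (B : Matrix (Fin n) (Fin n) ℝ) {i : Fin n} (hi : (i : ℕ) < k) (j : Fin n) :
    (embedBlock n γ * B) i j = ∑ l : Fin k, (γ ⟨i, hi⟩ l : ℝ) * B (Fin.castLE hkn l) j := by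
  rw [mul_apply, eq_comm]
  refine Fintype.sum_of_injective (Fin.castLE hkn) (Fin.castLE_injective hkn) _ _ ?_ ?_
  · intro l hl
    have hlk : ¬(l : ℕ) < k := fun h => hl ⟨⟨l, h⟩, rfl⟩
    simp [embedBlock, hlk, Fin.ext_iff, show (i : ℕ) ≠ l by omega]
  · intro l
    simp [embedBlock, hi]

theorem embedBlock_mul_apply_eq_sum_range (hkn : k < n) (γ : Matrix (Fin k) (Fin k) ℤ)
    (B : Matrix (Fin n) (Fin n) ℝ) {i j : ℕ} (hi : i < k) (hj : j < n) :
    (embedBlock n γ * B) ⟨i, by omega⟩ ⟨j, hj⟩ = ∑ l ∈ Finset.range k,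
      (if h : i < k ∧ l < k then ((γ ⟨i, h.1⟩ ⟨l, h.2⟩ : ℤ) : ℝ) else 0) *
      (if h : l < n ∧ j < n then B ⟨l, h.1⟩ ⟨j, h.2⟩ else 0) := by
  rw [embedBlock_mul_apply_of_lt hkn.le γ B hi, Finset.sum_range]
  refine Finset.sum_congr rfl fun l _ => ?_
  rw [dif_pos ⟨hi, l.isLt⟩, dif_pos ⟨by omega, hj⟩]
  rfl

end Embedding

theorem prod_Icc_pos {z : ℕ → ℝ} {N : ℕ} (hz : ∀ j, 1 ≤ j → j ≤ N → 0 < z j) {m : ℕ}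
    (hm : m ≤ N) : 0 < ∏ j ∈ Finset.Icc 1 m, z j :=
  Finset.prod_pos fun j hj => hz j (Finset.mem_Icc.1 hj).1 ((Finset.mem_Icc.1 hj).2.trans hm)

/-- Effect of the embedded SL_k(ℤ)-action on the superdiagonal entry x_{k,k+1}:
    the (k,k+1)-entry of the unipotent part of the Iwasawa form of
    diag(γ, I_{n−k})·z equals ∑_{i=1}^k γ_{k,i} x_{i,k+1}. -/
theorem stmt11 (n k : ℕ) (hk : 2 ≤ k) (hkn : k + 1 ≤ n)
    (γ : Matrix (Fin k) (Fin k) ℤ)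
    (x x' : Matrix (Fin n) (Fin n) ℝ)
    (hxd : ∀ i, x i i = 1) (hxl : ∀ i j : Fin n, j < i → x i j = 0)
    (hxd' : ∀ i, x' i i = 1) (hxl' : ∀ i j : Fin n, j < i → x' i j = 0)
    (y y' : ℕ → ℝ)
    (hy : ∀ j, 1 ≤ j → j ≤ n - 1 → 0 < y j) (hy' : ∀ j, 1 ≤ j → j ≤ n - 1 → 0 < y' j)
    (κ : Matrix (Fin n) (Fin n) ℝ) (hκ : κ * κ.transpose = 1) (c : ℝ) (hc : 0 < c)
    -- diag(γ, I_{n−k}) · (x·Y) = c • (x'·Y'·κ) : equality in X_n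
    (hIwa :
      (Matrix.of fun i j : Fin n =>
          if h : (i : ℕ) < k ∧ (j : ℕ) < k then ((γ ⟨i, h.1⟩ ⟨j, h.2⟩ : ℤ) : ℝ)
          else if i = j then 1 else 0) *
        (x * Matrix.diagonal fun i : Fin n => ∏ j ∈ Finset.Icc 1 (n - 1 - (i : ℕ)), y j)
      = c • (x' *
          (Matrix.diagonal fun i : Fin n => ∏ j ∈ Finset.Icc 1 (n - 1 - (i : ℕ)), y' j) *
          κ)) :
    let γf : ℕ → ℕ → ℝ := fun i j =>
      if h : i < k ∧ j < k then ((γ ⟨i, h.1⟩ ⟨j, h.2⟩ : ℤ) : ℝ) else 0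
    let xf : ℕ → ℕ → ℝ := fun i j =>
      if h : i < n ∧ j < n then x ⟨i, h.1⟩ ⟨j, h.2⟩ else 0
    x' ⟨k - 1, by omega⟩ ⟨k, by omega⟩ = ∑ i ∈ Finset.range k, γf (k - 1) i * xf i k := by
  intro γf xf
  set Y := fun i : Fin n => ∏ j ∈ Finset.Icc 1 (n - 1 - (i : ℕ)), y j
  set Y' := fun i : Fin n => ∏ j ∈ Finset.Icc 1 (n - 1 - (i : ℕ)), y' j
  have hY (i : Fin n) : Y i ≠ 0 := (prod_Icc_pos hy (by omega)).ne'
  have hY' (i : Fin n) : Y' i ≠ 0 := (prod_Icc_pos hy' (by omega)).ne'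
  set A := embedBlock n γ * (x * diagonal Y)
  set M := c • (x' * diagonal Y')
  have hMA : M * κ = A := by rw [smul_mul, ← hIwa]; rfl
  have hM : M.BlockTriangular id := fun i j hji => by simp [M, hxl' i j hji]
  have hMd (i : Fin n) : M i i = c * Y' i := by simp [M, hxd']
  have hA {i : Fin n} (hi : k ≤ i) (j : Fin n) : A i j = x i j * Y j := by
    simp [A, embedBlock_mul_apply_of_le γ _ hi]
  let i₀ : Fin n := ⟨k - 1, by omega⟩
  let i₁ : Fin n := ⟨k, by omega⟩
  have key := col_apply_mul_eq_of_mul_eq hκ hM (fun i => hMd i ▸ mul_ne_zero hc.ne' (hY' i)) hMA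
    (k := i₁) (fun i j hi hji => by rw [hA hi, hxl i j hji, zero_mul]) i₀
  have hA₀ : A i₀ i₁ = (∑ i ∈ Finset.range k, γf (k - 1) i * xf i k) * Y i₁ := by
    rw [show A = embedBlock n γ * x * diagonal Y from (Matrix.mul_assoc ..).symm, mul_diagonal,
      embedBlock_mul_apply_eq_sum_range (by omega) γ x (by omega)]
  have hM₀ : M i₀ i₁ = c * x' i₀ i₁ * Y' i₁ := by simp [M, mul_assoc]
  rw [hA₀, hA le_rfl, hxd, one_mul, hMd, hM₀] at key
  show x' i₀ i₁ = _
  refine mul_right_cancel₀ (mul_ne_zero (mul_ne_zero hc.ne' (hY' i₁)) (hY i₁)) ?_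
  linear_combination -key
end
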